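/- arXiv:1602.00534 — 3 statements merged into one kernel-verified Lean document; each statement's English description precedes it below -/
import Mathlib

section
/- First integrability condition for gradient Ricci solitons (Proposition 3.1, equation (3.1), algebraic form). Let n ≥ 3. Let R_{ijkl} be a 4-tensor with the curvature symmetries R_{ijkl} = −R_{jikl} = −R_{ijlk} = R_{klij}; set Ric_{ik} := Σ_j R_{ijkj}, R := Σ_i Ric_{ii}, and define the Weyl tensor W_{ijkl} := R_{ijkl} − (1/(n−2))(Ric_{ik}δ_{jl} − Ric_{il}δ_{jk} + Ric_{jl}δ_{ik} − Ric_{jk}δ_{il}) + (R/((n−1)(n−2)))(δ_{ik}δ_{jl} − δ_{il}δ_{jk}). Let f_t be a vector and T_{ijk} a 3-tensor (playing the role of ∇_k R_{ij}) satisfying the soliton commutation identity T_{ijk} − T_{ikj} = Σ_t f_t R_{tikj} for all i,j,k. Set S_k := 2 Σ_t f_t Ric_{tk}, define the Cotton tensor C_{ijk} := T_{ijk} − T_{ikj} − (1/(2(n−1)))(S_k δ_{ij} − S_j δ_{ik}), and define D_{ijk} := (1/(n−2))(f_k Ric_{ij} − f_j Ric_{ik}) + (1/((n−1)(n−2)))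 Σ_t f_t (Ric_{tk} δ_{ij} − Ric_{tj} δ_{ik}) − (R/((n−1)(n−2)))(f_k δ_{ij} − f_j δ_{ik}). Then C_{ijk} + Σ_t f_t W_{tijk} = D_{ijk} for all indices i,j,k. -/
/-- Kronecker delta in an orthonormal frame. -/
def kdelta {n : ℕ} (i j : Fin n) : ℝ := if i = j then 1 else 0

/-- First integrability condition for gradient Ricci solitons:
`C_{ijk} + f_t W_{tijk} = D_{ijk}`. -/
theorem first_integrability_condition {n : ℕ} (hn : 3 ≤ n)
    (Riem : Fin n → Fin n → Fin n → Fin n → ℝ)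
    (hsym1 : ∀ i j k l, Riem i j k l = - Riem j i k l)
    (hsym2 : ∀ i j k l, Riem i j k l = - Riem i j l k)
    (hsym3 : ∀ i j k l, Riem i j k l = Riem k l i j)
    (Ric : Fin n → Fin n → ℝ)
    (hRic : ∀ i k, Ric i k = ∑ j, Riem i j k j)
    (R : ℝ) (hR : R = ∑ i, Ric i i)
    (W : Fin n → Fin n → Fin n → Fin n → ℝ)
    (hW : ∀ i j k l, W i j k l = Riem i j k l
      - (1 / ((n : ℝ) - 2)) * (Ric i k * kdelta j l - Ric i l * kdelta j k
        + Ric j l * kdelta i k - Ric j k * kdelta i l)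
      + (R / (((n : ℝ) - 1) * ((n : ℝ) - 2))) *
          (kdelta i k * kdelta j l - kdelta i l * kdelta j k))
    (f : Fin n → ℝ)
    (T : Fin n → Fin n → Fin n → ℝ)
    (hcomm : ∀ i j k, T i j k - T i k j = ∑ t, f t * Riem t i k j)
    (S : Fin n → ℝ)
    (hS : ∀ k, S k = 2 * ∑ t, f t * Ric t k)
    (C : Fin n → Fin n → Fin n → ℝ)
    (hC : ∀ i j k, C i j k = T i j k - T i k j
      - (1 / (2 * ((n : ℝ) - 1))) * (S k * kdelta i j - S j * kdelta i k))
    (D : Fin n → Fin n → Fin n → ℝ)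
    (hD : ∀ i j k, D i j k = (1 / ((n : ℝ) - 2)) * (f k * Ric i j - f j * Ric i k)
      + (1 / (((n : ℝ) - 1) * ((n : ℝ) - 2))) *
          (∑ t, f t * (Ric t k * kdelta i j - Ric t j * kdelta i k))
      - (R / (((n : ℝ) - 1) * ((n : ℝ) - 2))) * (f k * kdelta i j - f j * kdelta i k)) :
    ∀ i j k, C i j k + (∑ t, f t * W t i j k) = D i j k := by

  intro i j k
  have hn1 : ((n : ℝ) - 1) ≠ 0 := by
    have : (3 : ℝ) ≤ (n : ℝ) := by exact_mod_cast hn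
    linarith
  have hn2 : ((n : ℝ) - 2) ≠ 0 := by
    have : (3 : ℝ) ≤ (n : ℝ) := by exact_mod_cast hn
    linarith
  have hA : (∑ t, f t * Riem t i k j) = -(∑ t, f t * Riem t i j k) := by
    rw [← Finset.sum_neg_distrib]
    refine Finset.sum_congr rfl fun t _ => ?_
    rw [hsym2 t i j k]; ring
  have hdel : ∀ (g : Fin n → ℝ) (m : Fin n), (∑ t, g t * kdelta t m) = g m := by
    intro g m
    simp [kdelta, mul_ite, Finset.sum_ite_eq']
  have hWsum : (∑ t, f t * W t i j k)
      = (∑ t, f t * Riem t i j k)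
        - (1 / ((n : ℝ) - 2)) * ((∑ t, f t * Ric t j) * kdelta i k
            - (∑ t, f t * Ric t k) * kdelta i j
            + f j * Ric i k - f k * Ric i j)
        + (R / (((n : ℝ) - 1) * ((n : ℝ) - 2))) *
            (f j * kdelta i k - f k * kdelta i j) := by
    have expand : ∀ t, f t * W t i j k
        = f t * Riem t i j k
          - (1 / ((n : ℝ) - 2)) * ((f t * Ric t j) * kdelta i k
              - (f t * Ric t k) * kdelta i j
              + (f t * kdelta t j) * Ric i k - (f t * kdelta t k) * Ric i j)
          + (R / (((n : ℝ) - 1) * ((n : ℝ) - 2))) *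
              ((f t * kdelta t j) * kdelta i k - (f t * kdelta t k) * kdelta i j) := by
      intro t; rw [hW]; ring
    calc (∑ t, f t * W t i j k) = ∑ t, (f t * Riem t i j k
          - (1 / ((n : ℝ) - 2)) * ((f t * Ric t j) * kdelta i k
              - (f t * Ric t k) * kdelta i j
              + (f t * kdelta t j) * Ric i k - (f t * kdelta t k) * Ric i j)
          + (R / (((n : ℝ) - 1) * ((n : ℝ) - 2))) *
              ((f t * kdelta t j) * kdelta i k - (f t * kdelta t k) * kdelta i j)) :=
        Finset.sum_congr rfl fun t _ => expand t
      _ = _ := by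
        simp only [Finset.sum_add_distrib, Finset.sum_sub_distrib, ← Finset.mul_sum,
          ← Finset.sum_mul, hdel]
  have hDsum : (∑ t, f t * (Ric t k * kdelta i j - Ric t j * kdelta i k))
      = (∑ t, f t * Ric t k) * kdelta i j - (∑ t, f t * Ric t j) * kdelta i k := by
    simp only [mul_sub, Finset.sum_sub_distrib, ← mul_assoc, ← Finset.sum_mul]
  rw [hC, hD, hcomm, hS, hS, hA, hWsum, hDsum]
  field_simp
  ring
end

section
/- Pointwise identity in dimension three (the Remark after Theorem 4.1, algebraic part). Let n = 3. Let Ric_{ij} be a 2-tensor, R a real number, and f_i a vector. Let C_{kti} be a 3-tensor that is skew-symmetric in its last two indices (C_{kti} = −C_{kit}) and totally trace-free (Σ_k C_{kki} = 0, Σ_i C_{iti} = 0, Σ_i C_{kii} = 0), and suppose C_{kti} = D_{kti}, where D_{kti} := (f_i Ric_{kt} − f_t Ric_{ki}) + (1/2) Σ_s f_s (Ric_{si} δ_{kt} − Ric_{st} δ_{ki}) − (R/2)(f_i δ_{kt} − f_t δ_{ki}) is the tensor D in dimension three. Then (1/2) Σ_{k,t,i} (C_{kti})² = Σ_{k,t,i}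 C_{kti} Ric_{kt} f_i. -/
/-- Pointwise identity in dimension three: if `C = D` then
`(1/2)|C|² = C_{kti} R_{kt} f_i`. -/
theorem three_dim_pointwise_identity
    (Ric : Fin 3 → Fin 3 → ℝ) (R : ℝ) (f : Fin 3 → ℝ)
    (C : Fin 3 → Fin 3 → Fin 3 → ℝ)
    (hskew : ∀ k t i, C k t i = - C k i t)
    (htr1 : ∀ i, ∑ k, C k k i = 0)
    (htr2 : ∀ t, ∑ i, C i t i = 0)
    (htr3 : ∀ k, ∑ i, C k i i = 0)
    (hCD : ∀ k t i, C k t i = (f i * Ric k t - f t * Ric k i)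
      + (1/2) * (∑ s, f s * (Ric s i * kdelta k t - Ric s t * kdelta k i))
      - (R / 2) * (f i * kdelta k t - f t * kdelta k i)) :
    (1/2) * (∑ k, ∑ t, ∑ i, (C k t i)^2)
      = ∑ k, ∑ t, ∑ i, C k t i * Ric k t * f i := by
  have h0 := htr2 0
  have h1 := htr2 1
  have h2 := htr2 2
  simp only [hCD, Fin.sum_univ_three, kdelta, Fin.ext_iff] at h0 h1 h2
  norm_num at h0 h1 h2
  have key0 : f 0 * ((Ric 0 0 + Ric 1 1 + Ric 2 2) - R) = 0 := by
    linear_combination -h0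
  have key1 : f 1 * ((Ric 0 0 + Ric 1 1 + Ric 2 2) - R) = 0 := by
    linear_combination -h1
  have key2 : f 2 * ((Ric 0 0 + Ric 1 1 + Ric 2 2) - R) = 0 := by
    linear_combination -h2
  by_cases hR : Ric 0 0 + Ric 1 1 + Ric 2 2 = R
  · have hR' : R = Ric 0 0 + Ric 1 1 + Ric 2 2 := hR.symm
    subst hR'
    simp only [hCD, Fin.sum_univ_three, kdelta, Fin.ext_iff]
    norm_num
    ring
  · have hX : (Ric 0 0 + Ric 1 1 + Ric 2 2) - R ≠ 0 := sub_ne_zero.mpr hR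
    have hf : ∀ t : Fin 3, f t = 0 := by
      intro t
      fin_cases t
      · exact (mul_eq_zero.mp key0).resolve_right hX
      · exact (mul_eq_zero.mp key1).resolve_right hX
      · exact (mul_eq_zero.mp key2).resolve_right hX
    simp only [hCD, Fin.sum_univ_three, kdelta, hf]
    norm_num
end

section
/- Fourth integrability condition from the third (Proposition 3.1, equation (3.4), Euclidean component model). Let n ≥ 3 and work on ℝⁿ with ordinary partial derivatives. Let Ric : ℝⁿ → (Fin n → Fin n → ℝ) be a smooth symmetric tensor field, R := Σ_k Ric_{kk} its trace, S_i := ∂_i R, and assume the contracted second Bianchi identity Σ_j ∂_j Ric_{ij} = (1/2) S_i holds at every point. Define the Cotton tensor C_{kti} := ∂_i Ric_{kt} − ∂_t Ric_{ki} − (1/(2(n−1)))(S_i δ_{kt} − S_t δ_{ki}). Let D : ℝⁿ → (Fin n → Fin n → Fin n → ℝ) be a smooth tensor field such that Σ_{k,t} Ric_{kt} C_{kti} = (n−2) Σ_{t,k} ∂_t∂_k D_{itk} for every i at every point. Then at every point (1/2) Σ_{k,t,i} (C_{kti})² + Σ_{k,t,i} Ric_{kt} ∂_i C_{kti} = (n−2)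 Σ_{i,t,k} ∂_i∂_t∂_k D_{itk}. -/
/-- Partial derivative in the `i`-th coordinate direction on `ℝⁿ`. -/
noncomputable def pd {n : ℕ} (i : Fin n) (g : (Fin n → ℝ) → ℝ) : (Fin n → ℝ) → ℝ :=
  fun x => fderiv ℝ g x (Pi.single i 1)

lemma pd_contDiff {n : ℕ} (i : Fin n) {f : (Fin n → ℝ) → ℝ} (hf : ContDiff ℝ (⊤ : ℕ∞) f) :
    ContDiff ℝ (⊤ : ℕ∞) (pd i f) :=
  (hf.fderiv_right (by simp)).clm_apply contDiff_const

lemma pd_sum {n : ℕ} (i : Fin n) {ι : Type*} (s : Finset ι) (f : ι → (Fin n → ℝ) → ℝ)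
    (x : Fin n → ℝ) (hf : ∀ j ∈ s, DifferentiableAt ℝ (f j) x) :
    pd i (fun y => ∑ j ∈ s, f j y) x = ∑ j ∈ s, pd i (f j) x := by
  unfold pd
  rw [fderiv_fun_sum hf]
  simp

lemma pd_mul {n : ℕ} (i : Fin n) {f g : (Fin n → ℝ) → ℝ} (x : Fin n → ℝ)
    (hf : DifferentiableAt ℝ f x) (hg : DifferentiableAt ℝ g x) :
    pd i (fun y => f y * g y) x = f x * pd i g x + g x * pd i f x := by
  unfold pd
  rw [fderiv_fun_mul hf hg]
  simp

lemma pd_const_mul {n : ℕ} (i : Fin n) (c : ℝ) {f : (Fin n → ℝ) → ℝ} (x : Fin n → ℝ)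
    (hf : DifferentiableAt ℝ f x) :
    pd i (fun y => c * f y) x = c * pd i f x := by
  unfold pd
  rw [fderiv_const_mul hf]
  simp

lemma sum_comm3 {n : ℕ} (f : Fin n → Fin n → Fin n → ℝ) :
    ∑ i, ∑ k, ∑ t, f i k t = ∑ k, ∑ t, ∑ i, f i k t := by
  rw [Finset.sum_comm]
  exact Finset.sum_congr rfl fun k _ => Finset.sum_comm

/-- Fourth integrability condition from the third (Euclidean component model). -/
theorem fourth_integrability_from_third {n : ℕ} (hn : 3 ≤ n)
    (Ric : (Fin n → ℝ) → Fin n → Fin n → ℝ)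
    (hRicSmooth : ∀ i j, ContDiff ℝ (⊤ : ℕ∞) (fun x => Ric x i j))
    (hRicSym : ∀ x i j, Ric x i j = Ric x j i)
    (R : (Fin n → ℝ) → ℝ) (hR : ∀ x, R x = ∑ k, Ric x k k)
    (S : (Fin n → ℝ) → Fin n → ℝ) (hS : ∀ x i, S x i = pd i R x)
    (hBianchi : ∀ x i, ∑ j, pd j (fun y => Ric y i j) x = (1/2) * S x i)
    (C : (Fin n → ℝ) → Fin n → Fin n → Fin n → ℝ)
    (hC : ∀ x k t i, C x k t i
      = pd i (fun y => Ric y k t) x - pd t (fun y => Ric y k i) x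
        - (1 / (2 * ((n : ℝ) - 1))) * (S x i * kdelta k t - S x t * kdelta k i))
    (D : (Fin n → ℝ) → Fin n → Fin n → Fin n → ℝ)
    (hDSmooth : ∀ i t k, ContDiff ℝ (⊤ : ℕ∞) (fun x => D x i t k))
    (h3 : ∀ x i, ∑ k, ∑ t, Ric x k t * C x k t i
      = ((n : ℝ) - 2) * ∑ t, ∑ k, pd t (fun y => pd k (fun z => D z i t k) y) x) :
    ∀ x, (1/2) * (∑ k, ∑ t, ∑ i, (C x k t i)^2)
        + (∑ k, ∑ t, ∑ i, Ric x k t * pd i (fun y => C y k t i) x)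
      = ((n : ℝ) - 2) *
          ∑ i, ∑ t, ∑ k, pd i (fun y => pd t (fun z => pd k (fun w => D w i t k) z) y) x := by
  have hn3 : (3:ℝ) ≤ (n:ℝ) := by exact_mod_cast hn
  have hne : (n:ℝ) - 1 ≠ 0 := by linarith
  -- smoothness facts
  have hRfun : R = fun x => ∑ k, Ric x k k := funext hR
  have hRsm : ContDiff ℝ (⊤ : ℕ∞) R := by
    rw [hRfun]; exact ContDiff.sum fun k _ => hRicSmooth k k
  have hSfun : ∀ i, (fun x => S x i) = pd i R := fun i => funext fun x => hS x i
  have hSsm : ∀ i, ContDiff ℝ (⊤ : ℕ∞) (fun x => S x i) := fun i => (hSfun i) ▸ pd_contDiff i hRsm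
  have hCfun : ∀ k t i, (fun x => C x k t i) = fun x =>
      pd i (fun y => Ric y k t) x - pd t (fun y => Ric y k i) x
        - (1 / (2 * ((n : ℝ) - 1))) * (S x i * kdelta k t - S x t * kdelta k i) :=
    fun k t i => funext fun x => hC x k t i
  have hCsm : ∀ k t i, ContDiff ℝ (⊤ : ℕ∞) (fun x => C x k t i) := by
    intro k t i
    rw [hCfun k t i]
    exact ((pd_contDiff i (hRicSmooth k t)).sub (pd_contDiff t (hRicSmooth k i))).sub
      (contDiff_const.mul (((hSsm i).mul contDiff_const).sub ((hSsm t).mul contDiff_const)))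
  have dRic : ∀ k t (x : Fin n → ℝ), DifferentiableAt ℝ (fun y => Ric y k t) x :=
    fun k t x => ((hRicSmooth k t).differentiable (by simp)).differentiableAt
  have dC : ∀ k t i (x : Fin n → ℝ), DifferentiableAt ℝ (fun y => C y k t i) x :=
    fun k t i x => ((hCsm k t i).differentiable (by simp)).differentiableAt
  have dD2 : ∀ i t k (x : Fin n → ℝ),
      DifferentiableAt ℝ (fun y => pd t (fun z => pd k (fun w => D w i t k) z) y) x :=
    fun i t k x =>
      ((pd_contDiff t (pd_contDiff k (hDSmooth i t k))).differentiable (by simp)).differentiableAt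
  intro x
  -- antisymmetry of C in its last two indices
  have Cas : ∀ k a b, C x k b a = - C x k a b := by
    intro k a b
    rw [hC x k b a, hC x k a b]; ring
  -- trace identities
  have L1 : ∀ i, ∑ k, C x k k i = 0 := by
    intro i
    have e1 : ∑ k, pd i (fun y => Ric y k k) x = S x i := by
      rw [hS x i, hRfun]
      exact (pd_sum i Finset.univ _ x (fun k _ => dRic k k x)).symm
    have e2 : ∑ k, pd k (fun y => Ric y k i) x = (1/2) * S x i := by
      have hsym : ∀ k : Fin n, (fun y => Ric y k i) = (fun y => Ric y i k) :=
        fun k => funext fun y => hRicSym y k i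
      calc ∑ k, pd k (fun y => Ric y k i) x = ∑ k, pd k (fun y => Ric y i k) x :=
            Finset.sum_congr rfl fun k _ => by rw [hsym k]
        _ = (1/2) * S x i := hBianchi x i
    have e3 : ∑ k : Fin n, (S x i * kdelta k k - S x k * kdelta k i)
        = (n:ℝ) * S x i - S x i := by
      rw [Finset.sum_sub_distrib]
      simp [kdelta, Finset.sum_ite_eq, mul_comm]
    calc ∑ k, C x k k i
        = ∑ k, (pd i (fun y => Ric y k k) x - pd k (fun y => Ric y k i) x
            - (1 / (2 * ((n : ℝ) - 1))) * (S x i * kdelta k k - S x k * kdelta k i)) :=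
          Finset.sum_congr rfl fun k _ => hC x k k i
      _ = (∑ k, pd i (fun y => Ric y k k) x) - (∑ k, pd k (fun y => Ric y k i) x)
          - (1 / (2 * ((n : ℝ) - 1))) * ∑ k : Fin n, (S x i * kdelta k k - S x k * kdelta k i) := by
          rw [Finset.mul_sum, ← Finset.sum_sub_distrib, ← Finset.sum_sub_distrib]
      _ = 0 := by rw [e1, e2, e3]; field_simp; ring
  have L2 : ∀ t, ∑ k, C x k t k = 0 := by
    intro t
    have e1 : ∑ k, pd k (fun y => Ric y k t) x = (1/2) * S x t := by
      have hsym : ∀ k : Fin n, (fun y => Ric y k t) = (fun y => Ric y t k) :=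
        fun k => funext fun y => hRicSym y k t
      calc ∑ k, pd k (fun y => Ric y k t) x = ∑ k, pd k (fun y => Ric y t k) x :=
            Finset.sum_congr rfl fun k _ => by rw [hsym k]
        _ = (1/2) * S x t := hBianchi x t
    have e2 : ∑ k, pd t (fun y => Ric y k k) x = S x t := by
      rw [hS x t, hRfun]
      exact (pd_sum t Finset.univ _ x (fun k _ => dRic k k x)).symm
    have e3 : ∑ k : Fin n, (S x k * kdelta k t - S x t * kdelta k k)
        = S x t - (n:ℝ) * S x t := by
      rw [Finset.sum_sub_distrib]
      simp [kdelta, Finset.sum_ite_eq', mul_comm]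
    calc ∑ k, C x k t k
        = ∑ k, (pd k (fun y => Ric y k t) x - pd t (fun y => Ric y k k) x
            - (1 / (2 * ((n : ℝ) - 1))) * (S x k * kdelta k t - S x t * kdelta k k)) :=
          Finset.sum_congr rfl fun k _ => hC x k t k
      _ = (∑ k, pd k (fun y => Ric y k t) x) - (∑ k, pd t (fun y => Ric y k k) x)
          - (1 / (2 * ((n : ℝ) - 1))) * ∑ k : Fin n, (S x k * kdelta k t - S x t * kdelta k k) := by
          rw [Finset.mul_sum, ← Finset.sum_sub_distrib, ← Finset.sum_sub_distrib]
      _ = 0 := by rw [e1, e2, e3]; field_simp; ring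
  -- differentiate h3
  have hder : ∀ i : Fin n,
      ∑ k, ∑ t, (Ric x k t * pd i (fun y => C y k t i) x
          + C x k t i * pd i (fun y => Ric y k t) x)
      = ((n:ℝ) - 2) * ∑ t, ∑ k, pd i (fun y => pd t (fun z => pd k (fun w => D w i t k) z) y) x := by
    intro i
    have hfe : (fun y => ∑ k, ∑ t, Ric y k t * C y k t i)
        = (fun y => ((n : ℝ) - 2) * ∑ t, ∑ k, pd t (fun z => pd k (fun w => D w i t k) z) y) :=
      funext fun y => h3 y i
    have h4 := congrFun (congrArg (pd i) hfe) x
    have lhs_eq : pd i (fun y => ∑ k, ∑ t, Ric y k t * C y k t i) x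
        = ∑ k, ∑ t, (Ric x k t * pd i (fun y => C y k t i) x
            + C x k t i * pd i (fun y => Ric y k t) x) := by
      rw [pd_sum i Finset.univ (fun k => fun y => ∑ t, Ric y k t * C y k t i) x
        (fun k _ => DifferentiableAt.fun_sum fun t _ => (dRic k t x).mul (dC k t i x))]
      refine Finset.sum_congr rfl fun k _ => ?_
      rw [pd_sum i Finset.univ (fun t => fun y => Ric y k t * C y k t i) x
        (fun t _ => (dRic k t x).mul (dC k t i x))]
      exact Finset.sum_congr rfl fun t _ => pd_mul i x (dRic k t x) (dC k t i x)
    have rhs_eq : pd i (fun y => ((n:ℝ)-2) * ∑ t, ∑ k, pd t (fun z => pd k (fun w => D w i t k) z) y) x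
        = ((n:ℝ)-2) * ∑ t, ∑ k, pd i (fun y => pd t (fun z => pd k (fun w => D w i t k) z) y) x := by
      rw [pd_const_mul i _ x (DifferentiableAt.fun_sum fun t _ => DifferentiableAt.fun_sum fun k _ => dD2 i t k x)]
      congr 1
      rw [pd_sum i Finset.univ _ x (fun t _ => DifferentiableAt.fun_sum fun k _ => dD2 i t k x)]
      exact Finset.sum_congr rfl fun t _ => pd_sum i Finset.univ _ x fun k _ => dD2 i t k x
    rw [lhs_eq, rhs_eq] at h4
    exact h4
  -- termwise identity from the definition of C
  have hA : ∀ k t i, C x k t i * pd i (fun y => Ric y k t) x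
      = (C x k t i)^2 + C x k t i * pd t (fun y => Ric y k i) x
        + (1 / (2 * ((n : ℝ) - 1))) * (C x k t i * S x i * kdelta k t
            - C x k t i * S x t * kdelta k i) := by
    intro k t i
    have h := hC x k t i
    linear_combination (-(C x k t i)) * h
  -- B = -A
  have hB : (∑ k, ∑ t, ∑ i, C x k t i * pd t (fun y => Ric y k i) x)
      = - ∑ k, ∑ t, ∑ i, C x k t i * pd i (fun y => Ric y k t) x := by
    have e : ∀ k : Fin n, (∑ t, ∑ i, C x k t i * pd t (fun y => Ric y k i) x)
        = ∑ t, ∑ i, - (C x k t i * pd i (fun y => Ric y k t) x) := by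
      intro k
      rw [Finset.sum_comm]
      refine Finset.sum_congr rfl fun a _ => Finset.sum_congr rfl fun b _ => ?_
      rw [Cas k a b]; ring
    calc (∑ k, ∑ t, ∑ i, C x k t i * pd t (fun y => Ric y k i) x)
        = ∑ k, ∑ t, ∑ i, - (C x k t i * pd i (fun y => Ric y k t) x) :=
          Finset.sum_congr rfl fun k _ => e k
      _ = - ∑ k, ∑ t, ∑ i, C x k t i * pd i (fun y => Ric y k t) x := by
          simp [Finset.sum_neg_distrib]
  -- delta traces vanish
  have hT1 : ∑ k, ∑ t, ∑ i, C x k t i * S x i * kdelta k t = 0 := by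
    have e : ∀ k : Fin n, (∑ t, ∑ i, C x k t i * S x i * kdelta k t)
        = ∑ i, C x k k i * S x i := by
      intro k
      calc (∑ t, ∑ i, C x k t i * S x i * kdelta k t)
          = ∑ t, (∑ i, C x k t i * S x i) * kdelta k t :=
            Finset.sum_congr rfl fun t _ => (Finset.sum_mul _ _ _).symm
        _ = ∑ i, C x k k i * S x i := by simp [kdelta, Finset.sum_ite_eq]
    calc (∑ k, ∑ t, ∑ i, C x k t i * S x i * kdelta k t)
        = ∑ k, ∑ i, C x k k i * S x i := Finset.sum_congr rfl fun k _ => e k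
      _ = ∑ i, ∑ k, C x k k i * S x i := Finset.sum_comm
      _ = 0 := Finset.sum_eq_zero fun i _ => by rw [← Finset.sum_mul, L1 i, zero_mul]
  have hT2 : ∑ k, ∑ t, ∑ i, C x k t i * S x t * kdelta k i = 0 := by
    have e : ∀ k t, (∑ i, C x k t i * S x t * kdelta k i) = C x k t k * S x t := by
      intro k t; simp [kdelta, Finset.sum_ite_eq]
    calc (∑ k, ∑ t, ∑ i, C x k t i * S x t * kdelta k i)
        = ∑ k, ∑ t, C x k t k * S x t :=
          Finset.sum_congr rfl fun k _ => Finset.sum_congr rfl fun t _ => e k t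
      _ = ∑ t, ∑ k, C x k t k * S x t := Finset.sum_comm
      _ = 0 := Finset.sum_eq_zero fun t _ => by rw [← Finset.sum_mul, L2 t, zero_mul]
  -- the key contraction
  have key : (∑ k, ∑ t, ∑ i, C x k t i * pd i (fun y => Ric y k t) x)
      = (1/2) * ∑ k, ∑ t, ∑ i, (C x k t i)^2 := by
    have hsplit : (∑ k, ∑ t, ∑ i, C x k t i * pd i (fun y => Ric y k t) x)
        = (∑ k, ∑ t, ∑ i, (C x k t i)^2)
          + (∑ k, ∑ t, ∑ i, C x k t i * pd t (fun y => Ric y k i) x)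
          + (1 / (2 * ((n : ℝ) - 1))) *
            ((∑ k, ∑ t, ∑ i, C x k t i * S x i * kdelta k t)
              - (∑ k, ∑ t, ∑ i, C x k t i * S x t * kdelta k i)) := by
      simp only [hA, Finset.sum_add_distrib, Finset.sum_sub_distrib, ← Finset.mul_sum]
    rw [hT1, hT2, hB] at hsplit
    linarith [hsplit]
  -- assemble
  have hsum : (∑ i, ∑ k, ∑ t, (Ric x k t * pd i (fun y => C y k t i) x
        + C x k t i * pd i (fun y => Ric y k t) x))
      = ((n:ℝ)-2) * ∑ i, ∑ t, ∑ k, pd i (fun y => pd t (fun z => pd k (fun w => D w i t k) z) y) x := by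
    rw [Finset.mul_sum]
    exact Finset.sum_congr rfl fun i _ => hder i
  have hL : (∑ i, ∑ k, ∑ t, (Ric x k t * pd i (fun y => C y k t i) x
        + C x k t i * pd i (fun y => Ric y k t) x))
      = (∑ k, ∑ t, ∑ i, Ric x k t * pd i (fun y => C y k t i) x)
        + (∑ k, ∑ t, ∑ i, C x k t i * pd i (fun y => Ric y k t) x) := by
    rw [← sum_comm3 (fun i k t => Ric x k t * pd i (fun y => C y k t i) x),
      ← sum_comm3 (fun i k t => C x k t i * pd i (fun y => Ric y k t) x)]
    simp only [Finset.sum_add_distrib]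
  rw [hL, key] at hsum
  linarith [hsum]
end
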